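/- arXiv:math/0004185 — 4 statements merged into one kernel-verified Lean document; each statement's English description precedes it below -/
import Mathlib

section
/- Suppose (r(t), θ(t)) solves the system r' = P(t, r, θ), θ' = A(r) + Q(t, r, θ) on [1, ∞), r(t) is bounded, and there is M > 0 with ‖P(t, r(t), θ(t))‖ ≤ M t^{−p} and ‖Q(t, r(t), θ(t))‖ ≤ M t^{−p} for some p > 2. If A is Lipschitz with constant L on a compact set containing the range of r, and r* = lim_{t→∞} r(t), then the limit θ₀ = lim_{t→∞} (θ(t) − A(r*)·t) exists; consequently (r(t), θ(t)) converges to the solution (r*, A(r*)t + θ₀) of the unperturbed system r' = 0, θ' = A(r). -/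
open Real Set Filter

/-- If `(r, θ)` solves `r' = P(t,r,θ)`, `θ' = A(r) + Q(t,r,θ)` on `[1,∞)`,
`r` is bounded with limit `r*`, `‖P‖, ‖Q‖ ≤ M t^{−p}` along the solution with
`p > 2`, and `A` is Lipschitz on a compact set containing the range of `r`,
then `θ₀ = lim (θ(t) − t·A(r*))` exists; i.e. `(r,θ)` converges to the
unperturbed solution `(r*, t·A(r*) + θ₀)`. -/
theorem stmt4
    (m n : ℕ) (M p : ℝ) (L : NNReal)
    (hM : 0 < M) (hp : 2 < p)
    (A : EuclideanSpace ℝ (Fin m) → EuclideanSpace ℝ (Fin n))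
    (hA : ContDiff ℝ 1 A)
    (r : ℝ → EuclideanSpace ℝ (Fin m)) (θ : ℝ → EuclideanSpace ℝ (Fin n))
    (P : ℝ → EuclideanSpace ℝ (Fin m)) (Q : ℝ → EuclideanSpace ℝ (Fin n))
    (hr : ∀ t ∈ Ici (1:ℝ), HasDerivAt r (P t) t)
    (hθ : ∀ t ∈ Ici (1:ℝ), HasDerivAt θ (A (r t) + Q t) t)
    (hPc : ContinuousOn P (Ici 1)) (hQc : ContinuousOn Q (Ici 1))
    (hPb : ∀ t ∈ Ici (1:ℝ), ‖P t‖ ≤ M * t ^ (-p))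
    (hQb : ∀ t ∈ Ici (1:ℝ), ‖Q t‖ ≤ M * t ^ (-p))
    (K : Set (EuclideanSpace ℝ (Fin m)))
    (hK : IsCompact K) (hrK : ∀ t ∈ Ici (1:ℝ), r t ∈ K)
    (hLip : LipschitzOnWith L A K)
    (rstar : EuclideanSpace ℝ (Fin m))
    (hconv : Tendsto r atTop (nhds rstar)) :
    ∃ θ₀ : EuclideanSpace ℝ (Fin n),
      Tendsto (fun t => θ t - t • A rstar) atTop (nhds θ₀) := by

  have hp1 : (0:ℝ) < p - 1 := by linarith
  have hrc : ContinuousOn r (Ici 1) :=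
    fun t ht => (hr t ht).continuousAt.continuousWithinAt
  have hrstar : rstar ∈ K :=
    hK.isClosed.mem_of_tendsto hconv ((eventually_ge_atTop 1).mono fun t ht => hrK t ht)
  -- bound on ‖r t - rstar‖
  have key : ∀ t ∈ Ici (1:ℝ), ‖r t - rstar‖ ≤ M / (p-1) * t ^ (1-p) := by
    intro t ht
    have h1t : (1:ℝ) ≤ t := ht
    have ht0 : (0:ℝ) < t := by linarith
    have hbd : ∀ s ≥ t, ‖r s - r t‖ ≤ M / (p-1) * t ^ (1-p) := by
      intro s hts
      have hsub : uIcc t s ⊆ Ici 1 := by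
        rw [uIcc_of_le hts]; exact fun x hx => le_trans h1t hx.1
      have hnot0 : (0:ℝ) ∉ uIcc t s := by
        intro h; exact absurd (hsub h) (by norm_num)
      have hPint : IntervalIntegrable P MeasureTheory.volume t s :=
        (hPc.mono hsub).intervalIntegrable
      have heq : ∫ u in t..s, P u = r s - r t :=
        intervalIntegral.integral_eq_sub_of_hasDerivAt
          (fun u hu => hr u (hsub hu)) hPint
      have hInt2 : IntervalIntegrable (fun u : ℝ => M * u ^ (-p)) MeasureTheory.volume t s :=
        (intervalIntegral.intervalIntegrable_rpow (Or.inr hnot0)).const_mul M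
      have hval : ∫ u in t..s, M * u ^ (-p) = M / (p-1) * (t ^ (1-p) - s ^ (1-p)) := by
        rw [intervalIntegral.integral_const_mul,
          integral_rpow (Or.inr ⟨fun h => by linarith, hnot0⟩)]
        have h1 : -p + 1 = 1 - p := by ring
        have h2 : p - 1 ≠ 0 := by linarith
        have h3 : (1:ℝ) - p ≠ 0 := by linarith
        rw [h1]
        field_simp
        ring
      have hs1p : (0:ℝ) ≤ s ^ (1-p) := Real.rpow_nonneg (by linarith) _
      have hMp : (0:ℝ) ≤ M / (p-1) := by positivity
      calc ‖r s - r t‖ = ‖∫ u in t..s, P u‖ := by rw [heq]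
        _ ≤ ∫ u in t..s, M * u ^ (-p) := by
            have := intervalIntegral.norm_integral_le_abs_of_norm_le
              (f := P) (g := fun u => M * u ^ (-p)) (μ := MeasureTheory.volume) (a := t) (b := s)
              (MeasureTheory.ae_restrict_of_forall_mem measurableSet_uIoc
                (fun u hu => hPb u (hsub (uIoc_subset_uIcc hu)))) hInt2
            refine this.trans (le_of_eq ?_)
            rw [hval]
            rw [abs_of_nonneg]
            have hmono : s ^ (1-p) ≤ t ^ (1-p) :=
              Real.rpow_le_rpow_of_nonpos ht0 hts (by linarith)
            nlinarith [hmono, hMp]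
        _ = M / (p-1) * (t ^ (1-p) - s ^ (1-p)) := hval
        _ ≤ M / (p-1) * t ^ (1-p) := by nlinarith
    have htend : Tendsto (fun s => ‖r s - r t‖) atTop (nhds ‖rstar - r t‖) :=
      ((hconv.sub_const (r t)).norm)
    rw [norm_sub_rev]
    exact le_of_tendsto htend ((eventually_ge_atTop t).mono hbd)
  -- the derivative of f t = θ t - t • A rstar
  set g : ℝ → EuclideanSpace ℝ (Fin n) := fun t => (A (r t) - A rstar) + Q t with hg
  set C : ℝ := (L : ℝ) * (M / (p-1)) + M with hC
  have hgb : ∀ t ∈ Ici (1:ℝ), ‖g t‖ ≤ C * t ^ (1-p) := by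
    intro t ht
    have h1t : (1:ℝ) ≤ t := ht
    have ht0 : (0:ℝ) < t := by linarith
    have h1 : ‖A (r t) - A rstar‖ ≤ (L:ℝ) * (M / (p-1) * t ^ (1-p)) := by
      have := hLip.norm_sub_le (hrK t ht) hrstar
      exact this.trans (by
        have := key t ht
        nlinarith [NNReal.coe_nonneg L])
    have h2 : ‖Q t‖ ≤ M * t ^ (1-p) := by
      refine (hQb t ht).trans ?_
      have : t ^ (-p) ≤ t ^ (1-p) :=
        Real.rpow_le_rpow_of_exponent_le h1t (by linarith)
      nlinarith
    calc ‖g t‖ ≤ ‖A (r t) - A rstar‖ + ‖Q t‖ := norm_add_le _ _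
      _ ≤ (L:ℝ) * (M / (p-1) * t ^ (1-p)) + M * t ^ (1-p) := add_le_add h1 h2
      _ = C * t ^ (1-p) := by rw [hC]; ring
  have hgc : ContinuousOn g (Ici 1) :=
    ((hA.continuous.comp_continuousOn hrc).sub continuousOn_const).add hQc
  -- integrability of g on Ici 1
  have hCint : MeasureTheory.IntegrableOn (fun t : ℝ => C * t ^ (1-p)) (Ici 1) := by
    rw [integrableOn_Ici_iff_integrableOn_Ioi]
    exact ((integrableOn_Ioi_rpow_iff zero_lt_one).2 (by linarith)).const_mul C
  have hgint : MeasureTheory.IntegrableOn g (Ici 1) := by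
    refine MeasureTheory.Integrable.mono' hCint
      (hgc.aestronglyMeasurable measurableSet_Ici) ?_
    exact MeasureTheory.ae_restrict_of_forall_mem measurableSet_Ici hgb
  -- f t - f 1 = ∫_1^t g
  have hf : ∀ t ∈ Ici (1:ℝ), HasDerivAt (fun t => θ t - t • A rstar) (g t) t := by
    intro t ht
    have h1 : HasDerivAt (fun t : ℝ => t • A rstar) (A rstar) t := by
      simpa using (hasDerivAt_id t).smul_const (A rstar)
    have := (hθ t ht).sub h1
    refine HasDerivAt.congr_deriv this ?_
    rw [hg]
    abel
  have heq : ∀ t ∈ Ici (1:ℝ),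
      θ t - t • A rstar = (θ 1 - (1:ℝ) • A rstar) + ∫ u in (1:ℝ)..t, g u := by
    intro t ht
    have h1t : (1:ℝ) ≤ t := ht
    have hsub : uIcc 1 t ⊆ Ici 1 := by
      rw [uIcc_of_le h1t]; exact fun x hx => hx.1
    have : ∫ u in (1:ℝ)..t, g u = (θ t - t • A rstar) - (θ 1 - (1:ℝ) • A rstar) :=
      intervalIntegral.integral_eq_sub_of_hasDerivAt (fun u hu => hf u (hsub hu))
        ((hgint.mono_set hsub).intervalIntegrable)
    rw [this]; abel
  refine ⟨(θ 1 - (1:ℝ) • A rstar) + ∫ u in Ioi (1:ℝ), g u, ?_⟩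
  have htend : Tendsto (fun t => (θ 1 - (1:ℝ) • A rstar) + ∫ u in (1:ℝ)..t, g u) atTop
      (nhds ((θ 1 - (1:ℝ) • A rstar) + ∫ u in Ioi (1:ℝ), g u)) :=
    tendsto_const_nhds.add
      (MeasureTheory.intervalIntegral_tendsto_integral_Ioi 1
        (hgint.mono_set Ioi_subset_Ici_self) tendsto_id)
  exact htend.congr' (by
    filter_upwards [eventually_ge_atTop (1:ℝ)] with t ht
    exact (heq t ht).symm)
end

section
/- For each r₀ > 0, the functions x₁(t) = r₀ cos t · exp(sin(ln(ln t))), x₂(t) = r₀ sin t · exp(sin(ln(ln t))) solve, for t > e, the system x₁' = −x₂ + [cos(ln(ln t))/(t ln t)]·x₁, x₂' = x₁ + [cos(ln(ln t))/(t ln t)]·x₂; this solution is bounded, with r₀/e ≤ √(x₁(t)² + x₂(t)²) ≤ r₀·e, but √(x₁(t)² + x₂(t)²) does not converge as t → ∞. -/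
open Real Set Filter

/-- For each `r₀ > 0`, `x₁ = r₀ cos t · e^{sin(ln ln t)}`,
`x₂ = r₀ sin t · e^{sin(ln ln t)}` solves, for `t > e`, the system
`x₁' = −x₂ + (cos(ln ln t)/(t ln t)) x₁`, `x₂' = x₁ + (cos(ln ln t)/(t ln t)) x₂`;
the solution is bounded, `r₀/e ≤ √(x₁² + x₂²) ≤ r₀ e`, but the radius
does not converge as `t → ∞`. -/
theorem stmt7 (r₀ : ℝ) (hr₀ : 0 < r₀) :
    let x₁ : ℝ → ℝ := fun t => r₀ * Real.cos t * Real.exp (Real.sin (Real.log (Real.log t)))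
    let x₂ : ℝ → ℝ := fun t => r₀ * Real.sin t * Real.exp (Real.sin (Real.log (Real.log t)))
    (∀ t ∈ Ioi (Real.exp 1),
        HasDerivAt x₁ (-x₂ t + (Real.cos (Real.log (Real.log t)) / (t * Real.log t)) * x₁ t) t ∧
        HasDerivAt x₂ (x₁ t + (Real.cos (Real.log (Real.log t)) / (t * Real.log t)) * x₂ t) t) ∧
    (∀ t ∈ Ioi (Real.exp 1),
        r₀ / Real.exp 1 ≤ Real.sqrt ((x₁ t) ^ 2 + (x₂ t) ^ 2) ∧
        Real.sqrt ((x₁ t) ^ 2 + (x₂ t) ^ 2) ≤ r₀ * Real.exp 1) ∧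
    ¬ ∃ l : ℝ, Tendsto (fun t => Real.sqrt ((x₁ t) ^ 2 + (x₂ t) ^ 2)) atTop (nhds l) := by
  intro x₁ x₂
  have hsqrt : ∀ t : ℝ, Real.sqrt ((x₁ t) ^ 2 + (x₂ t) ^ 2)
      = r₀ * Real.exp (Real.sin (Real.log (Real.log t))) := by
    intro t
    have hE : 0 < Real.exp (Real.sin (Real.log (Real.log t))) := Real.exp_pos _
    have hsq : (x₁ t) ^ 2 + (x₂ t) ^ 2
        = (r₀ * Real.exp (Real.sin (Real.log (Real.log t)))) ^ 2 := by
      simp only [x₁, x₂]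
      linear_combination (r₀ * Real.exp (Real.sin (Real.log (Real.log t)))) ^ 2 *
        (Real.sin_sq_add_cos_sq t)
    rw [hsq, Real.sqrt_sq (by positivity)]
  refine ⟨?_, ?_, ?_⟩
  · -- derivatives
    intro t ht
    have ht0 : (0:ℝ) < t := lt_trans (Real.exp_pos 1) ht
    have hlog1 : 1 < Real.log t := by
      rw [Real.lt_log_iff_exp_lt ht0]; exact ht
    have hlog0 : 0 < Real.log t := lt_trans one_pos hlog1
    have h1 : HasDerivAt Real.log t⁻¹ t := Real.hasDerivAt_log (ne_of_gt ht0)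
    have h2 : HasDerivAt Real.log (Real.log t)⁻¹ (Real.log t) :=
      Real.hasDerivAt_log (ne_of_gt hlog0)
    have h3 : HasDerivAt (fun s => Real.log (Real.log s)) ((Real.log t)⁻¹ * t⁻¹) t :=
      h2.comp t h1
    have h4 : HasDerivAt (fun s => Real.sin (Real.log (Real.log s)))
        (Real.cos (Real.log (Real.log t)) * ((Real.log t)⁻¹ * t⁻¹)) t :=
      (Real.hasDerivAt_sin _).comp t h3
    have h5 : HasDerivAt (fun s => Real.exp (Real.sin (Real.log (Real.log s))))
        (Real.exp (Real.sin (Real.log (Real.log t))) *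
          (Real.cos (Real.log (Real.log t)) * ((Real.log t)⁻¹ * t⁻¹))) t :=
      (Real.hasDerivAt_exp _).comp t h4
    have hc : HasDerivAt (fun s => r₀ * Real.cos s) (r₀ * (-Real.sin t)) t :=
      (Real.hasDerivAt_cos t).const_mul r₀
    have hs : HasDerivAt (fun s => r₀ * Real.sin s) (r₀ * Real.cos t) t :=
      (Real.hasDerivAt_sin t).const_mul r₀
    constructor
    · have := hc.mul h5
      refine this.congr_deriv ?_
      simp only [x₁, x₂]
      field_simp
    · have := hs.mul h5
      refine this.congr_deriv ?_
      simp only [x₁, x₂]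
      field_simp
  · -- bounds
    intro t _
    rw [hsqrt t]
    constructor
    · rw [div_eq_mul_inv, ← Real.exp_neg]
      exact mul_le_mul_of_nonneg_left (Real.exp_le_exp.2 (Real.neg_one_le_sin _)) hr₀.le
    · exact mul_le_mul_of_nonneg_left (Real.exp_le_exp.2 (Real.sin_le_one _)) hr₀.le
  · -- no limit
    rintro ⟨l, hl⟩
    have hseq : ∀ c : ℝ, Tendsto (fun n : ℕ => Real.exp (Real.exp (c + n * (2 * π)))) atTop atTop := by
      intro c
      refine Real.tendsto_exp_atTop.comp (Real.tendsto_exp_atTop.comp ?_)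
      apply tendsto_atTop_add_const_left
      exact Tendsto.atTop_mul_const (by positivity)
        (tendsto_natCast_atTop_atTop)
    have key : ∀ c : ℝ, l = r₀ * Real.exp (Real.sin c) := by
      intro c
      have h1 : Tendsto (fun n : ℕ =>
          Real.sqrt ((x₁ (Real.exp (Real.exp (c + n * (2 * π))))) ^ 2 +
            (x₂ (Real.exp (Real.exp (c + n * (2 * π))))) ^ 2)) atTop (nhds l) :=
        hl.comp (hseq c)
      have h2 : (fun n : ℕ =>
          Real.sqrt ((x₁ (Real.exp (Real.exp (c + n * (2 * π))))) ^ 2 +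
            (x₂ (Real.exp (Real.exp (c + n * (2 * π))))) ^ 2))
          = fun _ : ℕ => r₀ * Real.exp (Real.sin c) := by
        funext n
        rw [hsqrt, Real.log_exp, Real.log_exp, Real.sin_add_nat_mul_two_pi]
      rw [h2] at h1
      exact tendsto_nhds_unique h1 tendsto_const_nhds
    have e1 := key (π / 2)
    have e2 := key (-(π / 2))
    rw [Real.sin_pi_div_two] at e1
    rw [Real.sin_neg, Real.sin_pi_div_two] at e2
    have : Real.exp 1 = Real.exp (-1) := by
      have := e1.symm.trans e2
      exact mul_left_cancel₀ (ne_of_gt hr₀) this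
    have := Real.exp_injective this
    norm_num at this
end

section
/- The solutions of the system r₁' = 1/t², r₂' = 2/t², θ₁' = r₁, θ₂' = r₂ with data at t₀ = 1 are r̄₁(t) = r̄₁⁰ − 1/t, r̄₂(t) = r̄₂⁰ − 2/t, θ̄₁(t) = r̄₁⁰ t − ln t + θ̄₁⁰, θ̄₂(t) = r̄₂⁰ t − 2 ln t + θ̄₂⁰ (up to additive constants), and if r̄₂⁰ ≠ 2 r̄₁⁰ with r̄₁⁰, r̄₂⁰ > 0, then there is no increasing function s(t) → ∞ and no constants θ₁⁰, θ₂⁰ such that both θ̄₁(t) − (r̄₁⁰ s(t) + θ₁⁰) → 0 and θ̄₂(t) − (r̄₂⁰ s(t) + θ₂⁰) → 0 as t → ∞. -/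
open Real Set Filter

/-- The explicit solutions of `r₁' = 1/t²`, `r₂' = 2/t²`, `θₖ' = rₖ`, and the
failure of orbital convergence when `r̄₂⁰ ≠ 2 r̄₁⁰`. -/
theorem stmt9 (a b c d : ℝ) (ha : 0 < a) (hb : 0 < b) (hne : b ≠ 2 * a) :
    let r₁ : ℝ → ℝ := fun t => a - 1 / t
    let r₂ : ℝ → ℝ := fun t => b - 2 / t
    let θ₁ : ℝ → ℝ := fun t => a * t - Real.log t + c
    let θ₂ : ℝ → ℝ := fun t => b * t - 2 * Real.log t + d
    (∀ t ∈ Ici (1:ℝ),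
        HasDerivAt r₁ (1 / t ^ 2) t ∧ HasDerivAt r₂ (2 / t ^ 2) t ∧
        HasDerivAt θ₁ (r₁ t) t ∧ HasDerivAt θ₂ (r₂ t) t) ∧
    ¬ ∃ s : ℝ → ℝ, StrictMono s ∧ Tendsto s atTop atTop ∧
        ∃ c₀ d₀ : ℝ,
          Tendsto (fun t => θ₁ t - (a * s t + c₀)) atTop (nhds 0) ∧
          Tendsto (fun t => θ₂ t - (b * s t + d₀)) atTop (nhds 0) := by
  intro r₁ r₂ θ₁ θ₂
  constructor
  · intro t ht
    have ht0 : t ≠ 0 := by have : (1:ℝ) ≤ t := ht; linarith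
    have hinv : HasDerivAt (fun x : ℝ => 1 / x) (-(1 / t ^ 2)) t := by
      simpa [one_div] using hasDerivAt_inv ht0
    have h2inv : HasDerivAt (fun x : ℝ => 2 / x) (-(2 / t ^ 2)) t := by
      have := (hasDerivAt_inv ht0).const_mul (2:ℝ)
      simpa [one_div, div_eq_mul_inv, mul_comm, neg_mul, mul_neg] using this
    have hlog : HasDerivAt Real.log (1 / t) t := by
      simpa [one_div] using Real.hasDerivAt_log ht0
    refine ⟨?_, ?_, ?_, ?_⟩
    · simpa [r₁, one_div] using hinv.const_sub a
    · simpa [r₂, one_div] using h2inv.const_sub b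
    · have := (((hasDerivAt_id t).const_mul a).sub hlog).add_const c
      simpa [r₁, θ₁] using this
    · have := (((hasDerivAt_id t).const_mul b).sub (hlog.const_mul 2)).add_const d
      refine this.congr_deriv ?_
      show b * 1 - 2 * (1 / t) = b - 2 / t
      ring
  · rintro ⟨s, _, _, c₀, d₀, h1, h2⟩
    have h3 : Tendsto (fun t => b * (θ₁ t - (a * s t + c₀)) - a * (θ₂ t - (b * s t + d₀)))
        atTop (nhds 0) := by
      simpa using (h1.const_mul b).sub (h2.const_mul a)
    have heq : (fun t => b * (θ₁ t - (a * s t + c₀)) - a * (θ₂ t - (b * s t + d₀)))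
        = fun t => (2 * a - b) * Real.log t + (b * c - a * d - b * c₀ + a * d₀) := by
      funext t; simp only [θ₁, θ₂]; ring
    rw [heq] at h3
    have hne2 : 2 * a - b ≠ 0 := fun h => hne (by linarith)
    have h4 : Tendsto (fun t : ℝ => Real.log t)
        atTop (nhds ((0 - (b * c - a * d - b * c₀ + a * d₀)) / (2 * a - b))) := by
      have h5 := (h3.sub_const (b * c - a * d - b * c₀ + a * d₀)).div_const (2 * a - b)
      have : (fun t => ((2 * a - b) * Real.log t + (b * c - a * d - b * c₀ + a * d₀)
          - (b * c - a * d - b * c₀ + a * d₀)) / (2 * a - b)) = fun t : ℝ => Real.log t := by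
        funext t; field_simp; ring
      rwa [this] at h5
    exact not_tendsto_nhds_of_tendsto_atTop Real.tendsto_log_atTop _ h4
end

section
/- For the system r' = r(1 + ln t)/(t ln t)², θ' = r², the solution with r(2) = r₀ e^{1/(2 ln 2)} is r̄(t) = r₀ exp(−1/(t ln t)), θ̄(t) = θ₀ + r₀² ∫₂^t exp(−2/(s ln s)) ds; one has r̄(t) → r₀ as t → ∞, but θ̄(t) − r₀² t → −∞, so the bounded solution does not converge to any solution (r₀, r₀² t + c) of the unperturbed system r' = 0, θ' = r². -/
open Real Set Filter

private lemma aux_glpos {t : ℝ} (ht : 1 < t) : 0 < t * Real.log t :=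
  mul_pos (by linarith) (Real.log_pos ht)

private lemma aux_exp_bound {x : ℝ} (hx0 : 0 ≤ x) (hx3 : x ≤ 3) :
    Real.exp (-x) ≤ 1 - x / 4 := by
  have h1 : x + 1 ≤ Real.exp x := Real.add_one_le_exp x
  have h2 : 0 < Real.exp (-x) := Real.exp_pos _
  have h3 : Real.exp (-x) * Real.exp x = 1 := by
    rw [← Real.exp_add]; simp
  nlinarith [mul_le_mul_of_nonneg_left h1 h2.le]

-- continuity of f on Ioi 1
private lemma aux_fcont : ContinuousOn (fun s : ℝ => Real.exp (-(2 / (s * Real.log s)))) (Ioi 1) := by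
  apply ContinuousOn.rexp
  apply ContinuousOn.neg
  apply ContinuousOn.div continuousOn_const
  · exact continuousOn_id.mul (Real.continuousOn_log.mono (by
      intro x hx; simp at hx ⊢; linarith))
  · intro x hx
    exact (aux_glpos hx).ne'

private lemma aux_gderiv {t : ℝ} (ht : 1 < t) :
    HasDerivAt (fun s : ℝ => s * Real.log s) (Real.log t + 1) t := by
  have := (hasDerivAt_id t).mul (Real.hasDerivAt_log (by linarith : t ≠ 0))
  refine this.congr_deriv ?_
  have h0 : t ≠ 0 := by linarith
  simp only [id, one_mul, mul_inv_cancel₀ h0]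

private lemma aux_rderiv {t : ℝ} (ht : 1 < t) (c : ℝ) :
    HasDerivAt (fun s : ℝ => Real.exp (-(c / (s * Real.log s))))
      (Real.exp (-(c / (t * Real.log t))) * (c * (Real.log t + 1) / (t * Real.log t) ^ 2)) t := by
  have hg := aux_gderiv ht
  have hne : t * Real.log t ≠ 0 := (aux_glpos ht).ne'
  have h1 : HasDerivAt (fun s : ℝ => -(c / (s * Real.log s)))
      (c * (Real.log t + 1) / (t * Real.log t) ^ 2) t := by
    have := ((hasDerivAt_const t c).div hg hne).neg
    refine this.congr_deriv ?_
    ring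
  exact h1.exp

private lemma aux_intderiv {t : ℝ} (ht : 2 ≤ t) :
    HasDerivAt (fun u : ℝ => ∫ s in (2:ℝ)..u, Real.exp (-(2 / (s * Real.log s))))
      (Real.exp (-(2 / (t * Real.log t)))) t := by
  have ht1 : (1:ℝ) < t := by linarith
  apply intervalIntegral.integral_hasDerivAt_right
  · apply ContinuousOn.intervalIntegrable
    apply aux_fcont.mono
    rw [Set.uIcc_of_le ht]
    intro x hx
    exact lt_of_lt_of_le (by norm_num) hx.1
  · exact ContinuousOn.stronglyMeasurableAtFilter isOpen_Ioi aux_fcont t ht1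
  · exact aux_fcont.continuousAt (Ioi_mem_nhds ht1)

private lemma aux_llderiv {t : ℝ} (ht : 1 < t) :
    HasDerivAt (fun s : ℝ => Real.log (Real.log s) / 2) (((Real.log t)⁻¹ * t⁻¹) / 2) t := by
  have h1 : Real.log t ≠ 0 := (Real.log_pos ht).ne'
  have h2 : t ≠ 0 := by linarith
  exact ((Real.hasDerivAt_log h1).comp t (Real.hasDerivAt_log h2)).div_const 2

private lemma aux_Fderiv {t : ℝ} (ht : 2 ≤ t) :
    HasDerivAt (fun u : ℝ =>
        (∫ s in (2:ℝ)..u, Real.exp (-(2 / (s * Real.log s)))) - u + Real.log (Real.log u) / 2)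
      (Real.exp (-(2 / (t * Real.log t))) - 1 + ((Real.log t)⁻¹ * t⁻¹) / 2) t := by
  have ht1 : (1:ℝ) < t := by linarith
  exact ((aux_intderiv ht).sub (hasDerivAt_id t)).add (aux_llderiv ht1)

private lemma aux_Fanti : AntitoneOn (fun u : ℝ =>
    (∫ s in (2:ℝ)..u, Real.exp (-(2 / (s * Real.log s)))) - u + Real.log (Real.log u) / 2)
    (Ici 2) := by
  apply antitoneOn_of_hasDerivWithinAt_nonpos (convex_Ici 2)
    (f' := fun t => Real.exp (-(2 / (t * Real.log t))) - 1 + ((Real.log t)⁻¹ * t⁻¹) / 2)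
  · exact fun t ht => (aux_Fderiv ht).continuousAt.continuousWithinAt
  · intro x hx
    rw [interior_Ici] at hx
    exact (aux_Fderiv (le_of_lt hx)).hasDerivWithinAt
  · intro x hx
    rw [interior_Ici] at hx
    have hx2 : (2:ℝ) ≤ x := le_of_lt hx
    have hx1 : (1:ℝ) < x := by linarith
    have hl2 : (0.6931471803:ℝ) < Real.log 2 := Real.log_two_gt_d9
    have hlx : Real.log 2 ≤ Real.log x := Real.log_le_log (by norm_num) hx2
    have hg : (4/3:ℝ) ≤ x * Real.log x := by nlinarith
    have hgpos : 0 < x * Real.log x := by linarith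
    have key := aux_exp_bound (x := 2 / (x * Real.log x))
      (by positivity) (by rw [div_le_iff₀ hgpos]; linarith)
    have hx0 : x ≠ 0 := by linarith
    have hlx0 : Real.log x ≠ 0 := (Real.log_pos hx1).ne'
    have heq : ((Real.log x)⁻¹ * x⁻¹) / 2 = (2 / (x * Real.log x)) / 4 := by
      rw [div_div]
      rw [eq_div_iff (by positivity)]
      field_simp
      ring
    rw [heq]
    linarith

private lemma aux_rtend (r₀ : ℝ) :
    Tendsto (fun t => r₀ * Real.exp (-(1 / (t * Real.log t)))) atTop (nhds r₀) := by
  have h1 : Tendsto (fun t : ℝ => t * Real.log t) atTop atTop :=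
    tendsto_id.atTop_mul_atTop₀ Real.tendsto_log_atTop
  have h2 : Tendsto (fun t : ℝ => -(1 / (t * Real.log t))) atTop (nhds 0) := by
    have := h1.inv_tendsto_atTop
    simp only [one_div]
    convert this.neg using 1
    simp
    simp
  have h3 : Tendsto (fun t : ℝ => Real.exp (-(1 / (t * Real.log t)))) atTop (nhds 1) :=
    (Real.continuous_exp.tendsto' 0 1 (by simp)).comp h2
  have := h3.const_mul r₀
  simpa using this

private lemma aux_lltend : Tendsto (fun t : ℝ => Real.log (Real.log t)) atTop atTop :=
  Real.tendsto_log_atTop.comp Real.tendsto_log_atTop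

/-- The solution `r̄(t) = r₀ e^{−1/(t ln t)}`,
`θ̄(t) = θ₀ + r₀² ∫₂^t e^{−2/(s ln s)} ds` of
`r' = r(1+ln t)/(t ln t)²`, `θ' = r²` satisfies `r̄ → r₀` but
`θ̄(t) − r₀² t → −∞`, so it converges to no solution `(r₀, r₀² t + c)`
of the unperturbed system. -/
theorem stmt10 (r₀ θ₀ : ℝ) (hr₀ : 0 < r₀) :
    let rbar : ℝ → ℝ := fun t => r₀ * Real.exp (-(1 / (t * Real.log t)))
    let θbar : ℝ → ℝ := fun t => θ₀ + r₀ ^ 2 * ∫ s in (2:ℝ)..t, Real.exp (-(2 / (s * Real.log s)))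
    rbar 2 = r₀ * Real.exp (-(1 / (2 * Real.log 2))) ∧
    (∀ t ∈ Ici (2:ℝ),
        HasDerivAt rbar (rbar t * (1 + Real.log t) / (t * Real.log t) ^ 2) t ∧
        HasDerivAt θbar ((rbar t) ^ 2) t) ∧
    Tendsto rbar atTop (nhds r₀) ∧
    Tendsto (fun t => θbar t - r₀ ^ 2 * t) atTop atBot ∧
    ¬ ∃ c₀ : ℝ, Tendsto (fun t => θbar t - (r₀ ^ 2 * t + c₀)) atTop (nhds 0) := by
  intro rbar θbar
  have hderiv : ∀ t ∈ Ici (2:ℝ),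
      HasDerivAt rbar (rbar t * (1 + Real.log t) / (t * Real.log t) ^ 2) t ∧
      HasDerivAt θbar ((rbar t) ^ 2) t := by
    intro t ht
    have ht2 : (2:ℝ) ≤ t := ht
    have ht1 : (1:ℝ) < t := by linarith
    constructor
    · have := HasDerivAt.const_mul r₀ (aux_rderiv ht1 1)
      refine this.congr_deriv ?_
      simp only [rbar]
      ring
    · have := HasDerivAt.const_add θ₀ (HasDerivAt.const_mul (r₀ ^ 2) (aux_intderiv ht2))
      refine this.congr_deriv ?_
      simp only [rbar]
      rw [mul_pow, sq (Real.exp _), ← Real.exp_add]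
      congr 2
      ring
  -- the atBot statement
  have hbot : Tendsto (fun t => θbar t - r₀ ^ 2 * t) atTop atBot := by
    -- the bounding function
    set B : ℝ → ℝ := fun t =>
      θ₀ + r₀ ^ 2 * (Real.log (Real.log 2) / 2 - 2 - Real.log (Real.log t) / 2) with hBdef
    have hB : Tendsto B atTop atBot := by
      have h3 := aux_lltend.const_mul_atTop (show (0:ℝ) < r₀ ^ 2 / 2 by positivity)
      have h4 : Tendsto (fun t : ℝ => -(r₀ ^ 2 / 2 * Real.log (Real.log t))) atTop atBot :=
        tendsto_neg_atTop_atBot.comp h3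
      have h5 := tendsto_atBot_add_const_left atTop
        (θ₀ + r₀ ^ 2 * (Real.log (Real.log 2) / 2 - 2)) h4
      convert h5 using 2 with t
      simp only [hBdef]
      ring
    apply tendsto_atBot_mono' atTop _ hB
    filter_upwards [eventually_ge_atTop (2:ℝ)] with t ht2
    have hF := aux_Fanti (self_mem_Ici) ht2 ht2
    simp only [intervalIntegral.integral_same] at hF
    -- hF : ∫₂^t f - t + log(log t)/2 ≤ 0 - 2 + log(log 2)/2
    have hmul := mul_le_mul_of_nonneg_left (by linarith :
        (∫ s in (2:ℝ)..t, Real.exp (-(2 / (s * Real.log s)))) - t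
          ≤ Real.log (Real.log 2) / 2 - 2 - Real.log (Real.log t) / 2)
      (sq_nonneg r₀)
    simp only [θbar, hBdef]
    nlinarith [hmul]
  refine ⟨rfl, hderiv, aux_rtend r₀, hbot, ?_⟩
  rintro ⟨c₀, hc⟩
  have hc' : Tendsto (fun t => θbar t - r₀ ^ 2 * t) atTop (nhds c₀) := by
    have := hc.add_const c₀
    rw [zero_add] at this
    convert this using 2 with t
    ring
  have h1 : ∀ᶠ t in atTop, θbar t - r₀ ^ 2 * t ≤ c₀ - 1 :=
    hbot.eventually (eventually_le_atBot (c₀ - 1))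
  have h2 : ∀ᶠ t in atTop, c₀ - 1 < θbar t - r₀ ^ 2 * t :=
    hc'.eventually (eventually_gt_nhds (by linarith))
  obtain ⟨t, ht1, ht2⟩ := (h1.and h2).exists
  linarith
end
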